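/- arXiv:2002.07407 — 11 statements merged into one kernel-verified Lean document; each statement's English description precedes it below -/
import Mathlib

section
/- Assume the base heuristic is sequentially improving and that R(ỹ_0) ∈ C, i.e., the complete trajectory generated by the base heuristic from the initial state is feasible. Then for every k = 0,…,N−1 the set U_k(ỹ_k) is nonempty (so the rollout algorithm is well defined), and G(R(ỹ_0)) ≥ G(T_0(ỹ_0,ũ_0)) ≥ G(T_1(ỹ_1,ũ_1)) ≥ ⋯ ≥ G(T_{N−1}(ỹ_{N−1},ũ_{N−1})) = G(ỹ_N). In particular, the final complete trajectory ỹ_N generated by the rollout algorithm is feasible (ỹ_N ∈ C) and G(ỹ_N) ≤ G(R(ỹ_0)). -/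
/-! Constrained deterministic DP setup.  A partial trajectory
`y_k = (x_0,u_0,…,u_{k-1},x_k)` is represented by its initial state together with its
first `k` controls: the intermediate states are determined by the system equation
`x_{t+1} = f_t(x_t,u_t)`, so the cost `G` and the constraint set `C` on complete
trajectories are expressed directly in terms of this data.  A base heuristic `R`,
given a stage `k` and a partial trajectory, returns the controls of the complementary
partial trajectory, indexed by absolute time (only times `k,…,N-1` are relevant);
the states of the complementary trajectory are again determined by the system
equation, starting from the last state of the given partial trajectory. -/

/-- A partial trajectory at stage `k`. -/
abbrev Ptraj (X U : Type) (k : ℕ) : Type := X × (Fin k → U)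

variable {X U : Type}

/-- `joinT N k y r` : the complete trajectory `y ∪ r` obtained by joining the partial
trajectory `y` (at stage `k`) with the tail controls `r` (indexed by absolute time). -/
def joinT (N k : ℕ) (y : Ptraj X U k) (r : ℕ → U) : Ptraj X U N :=
  ⟨y.1, fun t => if h : (t : ℕ) < k then y.2 ⟨t, h⟩ else r t⟩

/-- `extendT k y u` : the partial trajectory `y_{k+1} = (y_k, u_k, f_k(x_k,u_k))`. -/
def extendT (k : ℕ) (y : Ptraj X U k) (u : U) : Ptraj X U (k + 1) :=
  ⟨y.1, Fin.snoc y.2 u⟩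

/-- `Tk N R k y u` : the complete trajectory `T_k(y_k,u_k) = (y_k, u_k, R(y_{k+1}))`. -/
def Tk (N : ℕ) (R : (k : ℕ) → Ptraj X U k → ℕ → U) (k : ℕ) (y : Ptraj X U k) (u : U) :
    Ptraj X U N :=
  joinT N (k + 1) (extendT k y u) (R (k + 1) (extendT k y u))

/-- `Uk N R C k y` : the set `U_k(y_k) = {u_k ∣ T_k(y_k,u_k) ∈ C}`. -/
def Uk (N : ℕ) (R : (k : ℕ) → Ptraj X U k → ℕ → U) (C : Set (Ptraj X U N)) (k : ℕ)
    (y : Ptraj X U k) : Set U :=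
  {u | Tk N R k y u ∈ C}

/-- The base heuristic `R` is sequentially improving: for every `k` and partial
trajectory `y_k` with `y_k ∪ R(y_k) ∈ C`, the set `U_k(y_k)` is nonempty and
`G(y_k ∪ R(y_k)) ≥ min_{u_k ∈ U_k(y_k)} G(T_k(y_k,u_k))`. -/
def SeqImproving (N : ℕ) (G : Ptraj X U N → ℝ) (C : Set (Ptraj X U N))
    (R : (k : ℕ) → Ptraj X U k → ℕ → U) : Prop :=
  ∀ k < N, ∀ y : Ptraj X U k, joinT N k y (R k y) ∈ C →
    (Uk N R C k y).Nonempty ∧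
      ∃ u ∈ Uk N R C k y, G (Tk N R k y u) ≤ G (joinT N k y (R k y))

/-- The base heuristic `R` is sequentially consistent: the partial trajectory it
generates from `y_{k+1} = (y_k, u_k, x_{k+1})`, where `u_k` is the first control of
`R(y_k)`, is the tail of the partial trajectory it generates from `y_k`. -/
def SeqConsistent (N : ℕ) (R : (k : ℕ) → Ptraj X U k → ℕ → U) : Prop :=
  ∀ (k : ℕ) (y : Ptraj X U k) (t : ℕ), k < t → t < N →
    R (k + 1) (extendT k y (R k y k)) t = R k y t

/-- The initial (length-`0`) partial trajectory `ỹ_0 = (x̃_0)`. -/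
def ytraj0 (x0 : X) : Ptraj X U 0 := ⟨x0, fun t => t.elim0⟩

open Classical

/-- The control `ũ_k` chosen by the rollout algorithm at stage `k`:
a minimizer of `G(T_k(ỹ_k,u_k))` over `u_k ∈ U_k(ỹ_k)` (an arbitrary element of `U`
if no minimizer exists, which cannot happen under the assumptions of the theorem). -/
noncomputable def rollCtrl (N : ℕ) (G : Ptraj X U N → ℝ) (C : Set (Ptraj X U N))
    (R : (k : ℕ) → Ptraj X U k → ℕ → U) (x0 : X) [Nonempty U] (k : ℕ) : U :=
  let y : Ptraj X U k := ⟨x0, fun t : Fin k => rollCtrl N G C R x0 t.1⟩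
  if h : ∃ u ∈ Uk N R C k y, ∀ v ∈ Uk N R C k y, G (Tk N R k y u) ≤ G (Tk N R k y v) then
    h.choose
  else Classical.arbitrary U
termination_by k
decreasing_by exact t.2

/-! Let `J k = ỹ_k ∪ R(ỹ_k)` be the rollout trajectory up to stage `k`, completed by the base
heuristic. Then `J 0 = R(ỹ_0)`, `J N = ỹ_N` and `T_k(ỹ_k, ũ_k) = J (k + 1)`. If `J k` is
feasible, sequential improvement supplies some `u ∈ U_k(ỹ_k)` with `G(T_k(ỹ_k, u)) ≤ G(J k)`,
and the minimizer `ũ_k` does at least as well; hence `J (k + 1)` is feasible and no costlier.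
Induction from the feasible `J 0` gives everything. -/

theorem ytraj0_eq_mk (x0 : X) (f : Fin 0 → U) : ytraj0 x0 = (x0, f) :=
  Prod.ext rfl (Subsingleton.elim _ _)

theorem extendT_prefix (x0 : X) (u : ℕ → U) (k : ℕ) :
    extendT k (x0, fun t : Fin k => u t) (u k) = (x0, fun t : Fin (k + 1) => u t) := by
  refine Prod.ext rfl (funext fun t => ?_)
  induction t using Fin.lastCases with
  | last => exact Fin.snoc_last (α := fun _ => U) _ _
  | cast i => exact Fin.snoc_castSucc (α := fun _ => U) _ _ _

theorem joinT_self (y : Ptraj X U N) (r : ℕ → U) : joinT N N y r = y :=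
  Prod.ext rfl (funext fun t => dif_pos t.2)

section Rollout

variable (N : ℕ) (G : Ptraj X U N → ℝ) (C : Set (Ptraj X U N))
  (R : (k : ℕ) → Ptraj X U k → ℕ → U) (x0 : X) [Nonempty U]

noncomputable def rollTraj (k : ℕ) : Ptraj X U k :=
  (x0, fun t => rollCtrl N G C R x0 t)

noncomputable def rollJoin (k : ℕ) : Ptraj X U N :=
  joinT N k (rollTraj N G C R x0 k) (R k (rollTraj N G C R x0 k))

theorem rollJoin_zero : rollJoin N G C R x0 0 = joinT N 0 (ytraj0 x0) (R 0 (ytraj0 x0)) := by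
  rw [rollJoin, rollTraj, ← ytraj0_eq_mk]

theorem rollJoin_self : rollJoin N G C R x0 N = rollTraj N G C R x0 N :=
  joinT_self _ _

theorem Tk_rollTraj (k : ℕ) :
    Tk N R k (rollTraj N G C R x0 k) (rollCtrl N G C R x0 k) = rollJoin N G C R x0 (k + 1) := by
  rw [Tk, rollTraj, extendT_prefix]
  rfl

theorem isMinOn_rollCtrl [Finite U] (k : ℕ)
    (hne : (Uk N R C k (rollTraj N G C R x0 k)).Nonempty) :
    rollCtrl N G C R x0 k ∈ Uk N R C k (rollTraj N G C R x0 k) ∧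
      IsMinOn (fun u => G (Tk N R k (rollTraj N G C R x0 k) u))
        (Uk N R C k (rollTraj N G C R x0 k)) (rollCtrl N G C R x0 k) := by
  have hmin := Set.exists_min_image _ (fun u => G (Tk N R k (rollTraj N G C R x0 k) u))
    (Set.toFinite _) hne
  have hchoose : rollCtrl N G C R x0 k = hmin.choose := by
    rw [rollCtrl]
    exact dif_pos hmin
  rw [hchoose]
  exact ⟨hmin.choose_spec.1, isMinOn_iff.2 hmin.choose_spec.2⟩

variable {N G C R x0}

theorem SeqImproving.rollJoin_succ [Finite U] (hImp : SeqImproving N G C R) {k : ℕ} (hk : k < N)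
    (hJ : rollJoin N G C R x0 k ∈ C) :
    (Uk N R C k (rollTraj N G C R x0 k)).Nonempty ∧ rollJoin N G C R x0 (k + 1) ∈ C ∧
      G (rollJoin N G C R x0 (k + 1)) ≤ G (rollJoin N G C R x0 k) := by
  obtain ⟨hne, u, hu, hGu⟩ := hImp k hk _ hJ
  obtain ⟨hmem, hmin⟩ := isMinOn_rollCtrl N G C R x0 k hne
  rw [← Tk_rollTraj]
  exact ⟨hne, hmem, (hmin hu).trans hGu⟩

theorem SeqImproving.rollJoin_mem [Finite U] (hImp : SeqImproving N G C R)
    (h0 : rollJoin N G C R x0 0 ∈ C) {k : ℕ} (hk : k ≤ N) : rollJoin N G C R x0 k ∈ C := by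
  induction k with
  | zero => exact h0
  | succ k ih => exact (hImp.rollJoin_succ hk (ih (Nat.le_of_succ_le hk))).2.1

theorem SeqImproving.antitoneOn_rollJoin [Finite U] (hImp : SeqImproving N G C R)
    (h0 : rollJoin N G C R x0 0 ∈ C) :
    AntitoneOn (fun k => G (rollJoin N G C R x0 k)) (Set.Iic N) :=
  antitoneOn_of_add_one_le Set.ordConnected_Iic fun _ _ _ hk =>
    (hImp.rollJoin_succ hk (hImp.rollJoin_mem h0 (Nat.le_of_succ_le hk))).2.2

end Rollout

/-- Proposition 2.1: if the base heuristic is sequentially improving and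
`R(ỹ_0) ∈ C`, then each set `U_k(ỹ_k)` is nonempty (the rollout algorithm is well
defined), the costs `G(T_k(ỹ_k,ũ_k))` decrease monotonically starting from
`G(R(ỹ_0))`, with `G(T_{N-1}(ỹ_{N-1},ũ_{N-1})) = G(ỹ_N)`; in particular the final
trajectory `ỹ_N` is feasible and `G(ỹ_N) ≤ G(R(ỹ_0))`. -/
theorem constrained_rollout_cost_improvement
    {X U : Type} [Fintype U] [Nonempty U]
    (N : ℕ) (hN : 1 ≤ N)
    (G : Ptraj X U N → ℝ) (C : Set (Ptraj X U N))
    (R : (k : ℕ) → Ptraj X U k → ℕ → U) (x0 : X)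
    (hImp : SeqImproving N G C R)
    (hfeas : joinT N 0 (ytraj0 x0) (R 0 (ytraj0 x0)) ∈ C) :
    let util : ℕ → U := rollCtrl N G C R x0
    let ytil : (k : ℕ) → Ptraj X U k := fun k => ⟨x0, fun t : Fin k => util t⟩
    let Ttil : ℕ → Ptraj X U N := fun k => Tk N R k (ytil k) (util k)
    (∀ k < N, (Uk N R C k (ytil k)).Nonempty) ∧
    G (Ttil 0) ≤ G (joinT N 0 (ytraj0 x0) (R 0 (ytraj0 x0))) ∧
    (∀ k, k + 1 < N → G (Ttil (k + 1)) ≤ G (Ttil k)) ∧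
    (∀ k, k + 1 = N → G (Ttil k) = G (ytil N)) ∧
    ytil N ∈ C ∧
    G (ytil N) ≤ G (joinT N 0 (ytraj0 x0) (R 0 (ytraj0 x0))) := by
  intro util ytil Ttil
  have hT (k : ℕ) : Ttil k = rollJoin N G C R x0 (k + 1) := Tk_rollTraj N G C R x0 k
  rw [← rollJoin_zero] at hfeas ⊢
  have hmem (k : ℕ) (hk : k ≤ N) := hImp.rollJoin_mem hfeas hk
  have hanti := hImp.antitoneOn_rollJoin hfeas
  have hfinal : ytil N = rollJoin N G C R x0 N := (rollJoin_self N G C R x0).symm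
  refine ⟨fun k hk => (hImp.rollJoin_succ hk (hmem k hk.le)).1, ?_, fun k hk => ?_,
    fun k hk => by rw [hT, hk, hfinal], hfinal ▸ hmem N le_rfl, ?_⟩
  · rw [hT]
    exact (hImp.rollJoin_succ hN hfeas).2.2
  · rw [hT, hT]
    exact (hImp.rollJoin_succ hk (hmem _ hk.le)).2.2
  · rw [hfinal]
    exact hanti (Nat.zero_le N) Set.self_mem_Iic (Nat.zero_le N)
end

section
/- Assume only that R(ỹ_0) ∈ C, i.e., the base heuristic generates a feasible complete trajectory from the initial state. Then for every k = 0,…,N the tentative best trajectory T̂_k of the fortified rollout algorithm is feasible (T̂_k ∈ C), agrees with the current partial trajectory ỹ_k on its first k stages, and satisfies G(T̂_{k+1}) ≤ G(T̂_k) for k < N. In particular, the final complete trajectory generated by the fortified rollout algorithm equals T̂_N = ỹ_N, is feasible, and satisfies G(ỹ_N) ≤ G(R(ỹ_0)). -/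
variable {X U : Type}

open Classical

/-- the fortified rollout algorithm.  Assuming only `R(ỹ_0) ∈ C`, the
tentative best trajectories `T̂_k` are feasible, agree with the current partial
trajectory `ỹ_k` on the first `k` stages, and have monotonically nonincreasing costs;
in particular the final trajectory `T̂_N = ỹ_N` is feasible and
`G(ỹ_N) ≤ G(R(ỹ_0))`.  The sequences `util` (the controls `ũ_k`, which determine the
partial trajectories `ỹ_k = (x̃_0,ũ_0,…,ũ_{k-1},x̃_k)`) and `That` (the tentative best
trajectories `T̂_k`) are characterized by the hypotheses `hT0` and `halg`, which
describe the steps of the fortified rollout algorithm. -/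
theorem fortified_rollout_cost_improvement
    {X U : Type} [Fintype U] [Nonempty U]
    (N : ℕ) (hN : 1 ≤ N)
    (G : Ptraj X U N → ℝ) (C : Set (Ptraj X U N))
    (R : (k : ℕ) → Ptraj X U k → ℕ → U) (x0 : X)
    (util : ℕ → U) (That : ℕ → Ptraj X U N)
    (hfeas : joinT N 0 (ytraj0 x0) (R 0 (ytraj0 x0)) ∈ C)
    (hT0 : That 0 = joinT N 0 (ytraj0 x0) (R 0 (ytraj0 x0)))
    (halg : ∀ (k : ℕ) (hk : k < N),
      let y : Ptraj X U k := ⟨x0, fun t : Fin k => util t⟩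
      let Uhat : Set U :=
        {u ∈ Uk N R C k y | G (Tk N R k y u) ≤ G (That k)}
      (Uhat.Nonempty →
        util k ∈ Uhat ∧ (∀ v ∈ Uhat, G (Tk N R k y (util k)) ≤ G (Tk N R k y v)) ∧
          That (k + 1) = Tk N R k y (util k)) ∧
      (¬ Uhat.Nonempty →
        util k = (That k).2 ⟨k, hk⟩ ∧ That (k + 1) = That k)) :
    (∀ k ≤ N, That k ∈ C ∧ (That k).1 = x0 ∧
        ∀ t : Fin N, (t : ℕ) < k → (That k).2 t = util t) ∧
    (∀ k < N, G (That (k + 1)) ≤ G (That k)) ∧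
    That N = ⟨x0, fun t : Fin N => util t⟩ ∧
    (⟨x0, fun t : Fin N => util t⟩ : Ptraj X U N) ∈ C ∧
    G (⟨x0, fun t : Fin N => util t⟩ : Ptraj X U N) ≤
      G (joinT N 0 (ytraj0 x0) (R 0 (ytraj0 x0))) := by
  -- single step of the algorithm preserves the invariant and decreases cost
  have step : ∀ k, ∀ hk : k < N,
      (That k ∈ C ∧ (That k).1 = x0 ∧
        ∀ t : Fin N, (t : ℕ) < k → (That k).2 t = util t) →
      (That (k+1) ∈ C ∧ (That (k+1)).1 = x0 ∧
        (∀ t : Fin N, (t : ℕ) < k + 1 → (That (k+1)).2 t = util t) ∧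
        G (That (k+1)) ≤ G (That k)) := by
    intro k hk ⟨hC, hx, hpre⟩
    obtain ⟨H1, H2⟩ := halg k hk
    set y : Ptraj X U k := ⟨x0, fun t : Fin k => util t⟩ with hy
    by_cases hne : ({u ∈ Uk N R C k y | G (Tk N R k y u) ≤ G (That k)} : Set U).Nonempty
    · obtain ⟨⟨hmemU, hcost⟩, _, hTeq⟩ := H1 hne
      have hfeat : Tk N R k y (util k) ∈ C := hmemU
      refine ⟨hTeq ▸ hfeat, ?_, ?_, hTeq ▸ hcost⟩
      · rw [hTeq]; rfl
      · intro t ht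
        rw [hTeq]
        show (joinT N (k+1) (extendT k y (util k)) _).2 t = util t
        rw [joinT]
        simp only
        rw [dif_pos ht]
        simp only [extendT]
        rcases Nat.lt_succ_iff_lt_or_eq.mp ht with h | h
        · have : (⟨(t:ℕ), ht⟩ : Fin (k+1)) = Fin.castSucc ⟨(t:ℕ), h⟩ := rfl
          rw [this, Fin.snoc_castSucc]
        · have : (⟨(t:ℕ), ht⟩ : Fin (k+1)) = Fin.last k := by
            ext; exact h
          rw [this, Fin.snoc_last, h]
    · obtain ⟨huk, hTeq⟩ := H2 hne
      refine ⟨hTeq ▸ hC, hTeq ▸ hx, ?_, le_of_eq (by rw [hTeq])⟩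
      intro t ht
      rw [hTeq]
      rcases Nat.lt_succ_iff_lt_or_eq.mp ht with h | h
      · exact hpre t h
      · have : t = ⟨k, hk⟩ := by ext; exact h
        rw [this, ← huk]
  have inv : ∀ k ≤ N, That k ∈ C ∧ (That k).1 = x0 ∧
      ∀ t : Fin N, (t : ℕ) < k → (That k).2 t = util t := by
    intro k
    induction k with
    | zero =>
      intro _
      rw [hT0]
      exact ⟨hfeas, rfl, fun t ht => absurd ht (Nat.not_lt_zero _)⟩
    | succ k ih =>
      intro hk1
      have hk : k < N := hk1
      obtain ⟨a, b, c, _⟩ := step k hk (ih (le_of_lt hk))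
      exact ⟨a, b, c⟩
  have mono : ∀ k < N, G (That (k + 1)) ≤ G (That k) := fun k hk =>
    (step k hk (inv k (le_of_lt hk))).2.2.2
  have hfin : That N = ⟨x0, fun t : Fin N => util t⟩ := by
    obtain ⟨_, hx, hpre⟩ := inv N le_rfl
    refine Prod.ext hx (funext fun t => hpre t t.2)
  have hchain : ∀ k ≤ N, G (That k) ≤ G (That 0) := by
    intro k
    induction k with
    | zero => intro _; exact le_rfl
    | succ k ih =>
      intro hk1
      exact le_trans (mono k hk1) (ih (le_of_lt hk1))
  refine ⟨inv, mono, hfin, hfin ▸ (inv N le_rfl).1, ?_⟩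
  have := hchain N le_rfl
  rw [hfin, hT0] at this
  exact this
end

section
/- Assume the base heuristic is sequentially improving and R(ỹ_0) ∈ C. Then at every stage k of the fortified rollout algorithm the set Û_k(ỹ_k) is nonempty and contains every minimizer of G(T_k(ỹ_k,·)) over U_k(ỹ_k), so that the empty case never occurs, T̂_{k+1} = T_k(ỹ_k,ũ_k) for all k, and the fortified rollout algorithm generates the same complete trajectory as the nonfortified rollout algorithm under the same tie-breaking rule in the argmin. -/
variable {X U : Type}

open Classical

/-- The partial trajectory `(x̃_0, u_0, …, u_{k-1}, x̃_k)` built from the controls `u`. -/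
def ytilOf (x0 : X) (u : ℕ → U) (k : ℕ) : Ptraj X U k :=
  ⟨x0, fun t : Fin k => u t⟩

/-- The set of minimizers of `u ↦ G (T_k(y,u))` over the set `S`. -/
def argminTk (N : ℕ) (G : Ptraj X U N → ℝ) (R : (k : ℕ) → Ptraj X U k → ℕ → U)
    (k : ℕ) (y : Ptraj X U k) (S : Set U) : Set U :=
  {u ∈ S | ∀ v ∈ S, G (Tk N R k y u) ≤ G (Tk N R k y v)}

/-- The set `Û_k(ỹ_k) = {u ∈ U_k(ỹ_k) ∣ G(T_k(ỹ_k,u)) ≤ G(T̂_k)}` of the fortified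
rollout algorithm, for controls `uF` and tentative best trajectories `TF`. -/
def UhatSet (N : ℕ) (G : Ptraj X U N → ℝ) (C : Set (Ptraj X U N))
    (R : (k : ℕ) → Ptraj X U k → ℕ → U) (x0 : X) (uF : ℕ → U)
    (TF : ℕ → Ptraj X U N) (k : ℕ) : Set U :=
  {u ∈ Uk N R C k (ytilOf x0 uF k) |
    G (Tk N R k (ytilOf x0 uF k) u) ≤ G (TF k)}


lemma extendT_ytilOf (x0 : X) (u : ℕ → U) (k : ℕ) :
    extendT k (ytilOf x0 u k) (u k) = ytilOf x0 u (k + 1) := by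
  unfold extendT ytilOf
  refine Prod.ext rfl ?_
  funext i
  refine Fin.lastCases ?_ (fun j => ?_) i
  · simp
  · simp

lemma Tk_ytilOf (N : ℕ) (R : (k : ℕ) → Ptraj X U k → ℕ → U) (x0 : X) (u : ℕ → U) (k : ℕ) :
    Tk N R k (ytilOf x0 u k) (u k)
      = joinT N (k + 1) (ytilOf x0 u (k + 1)) (R (k + 1) (ytilOf x0 u (k + 1))) := by
  unfold Tk
  rw [extendT_ytilOf]

/-- if the base heuristic is sequentially improving and `R(ỹ_0) ∈ C`,
then at every stage of the fortified rollout algorithm the set `Û_k(ỹ_k)` is nonempty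
and contains every minimizer of `G(T_k(ỹ_k,·))` over `U_k(ỹ_k)`, so the empty case
never occurs, `T̂_{k+1} = T_k(ỹ_k,ũ_k)` for all `k`, and the fortified algorithm
(controls `utilF`) generates the same complete trajectory as the nonfortified
algorithm (controls `util`), under the same tie-breaking rule `sel` in the argmin. -/
theorem fortified_eq_nonfortified_under_seqImproving
    {X U : Type} [Fintype U] [Nonempty U]
    (N : ℕ) (hN : 1 ≤ N)
    (G : Ptraj X U N → ℝ) (C : Set (Ptraj X U N))
    (R : (k : ℕ) → Ptraj X U k → ℕ → U) (x0 : X)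
    (hImp : SeqImproving N G C R)
    (hfeas : joinT N 0 (ytraj0 x0) (R 0 (ytraj0 x0)) ∈ C)
    -- a common tie-breaking rule used by both algorithms in their argmin steps
    (sel : ℕ → Set U → U)
    (hsel : ∀ (k : ℕ) (S : Set U), S.Nonempty → sel k S ∈ S)
    (util utilF : ℕ → U) (ThatF : ℕ → Ptraj X U N)
    -- the nonfortified rollout algorithm
    (hnf : ∀ k < N, util k =
      sel k (argminTk N G R k (ytilOf x0 util k) (Uk N R C k (ytilOf x0 util k))))
    -- the fortified rollout algorithm
    (hT0 : ThatF 0 = joinT N 0 (ytraj0 x0) (R 0 (ytraj0 x0)))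
    (hf : ∀ k < N, (UhatSet N G C R x0 utilF ThatF k).Nonempty →
      utilF k =
        sel k (argminTk N G R k (ytilOf x0 utilF k) (UhatSet N G C R x0 utilF ThatF k)) ∧
      ThatF (k + 1) = Tk N R k (ytilOf x0 utilF k) (utilF k))
    (hfempty : ∀ (k : ℕ) (hk : k < N), ¬ (UhatSet N G C R x0 utilF ThatF k).Nonempty →
      utilF k = (ThatF k).2 ⟨k, hk⟩ ∧ ThatF (k + 1) = ThatF k) :
    (∀ k < N,
      (UhatSet N G C R x0 utilF ThatF k).Nonempty ∧
      argminTk N G R k (ytilOf x0 utilF k) (Uk N R C k (ytilOf x0 utilF k)) ⊆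
        UhatSet N G C R x0 utilF ThatF k ∧
      ThatF (k + 1) = Tk N R k (ytilOf x0 utilF k) (utilF k)) ∧
    (∀ k < N, utilF k = util k) ∧
    ytilOf x0 utilF N = ytilOf x0 util N := by
  classical
  -- the main step, assuming the invariant at stage `k`
  have step : ∀ k, k < N →
      (∀ t < k, utilF t = util t) →
      ThatF k = joinT N k (ytilOf x0 utilF k) (R k (ytilOf x0 utilF k)) →
      ThatF k ∈ C →
      ((UhatSet N G C R x0 utilF ThatF k).Nonempty ∧
        argminTk N G R k (ytilOf x0 utilF k) (Uk N R C k (ytilOf x0 utilF k)) ⊆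
          UhatSet N G C R x0 utilF ThatF k ∧
        ThatF (k + 1) = Tk N R k (ytilOf x0 utilF k) (utilF k)) ∧
      utilF k = util k ∧
      ThatF (k + 1)
        = joinT N (k + 1) (ytilOf x0 utilF (k + 1)) (R (k + 1) (ytilOf x0 utilF (k + 1))) ∧
      ThatF (k + 1) ∈ C := by
    intro k hk hprev hTk hTC
    obtain ⟨hUne, u0, hu0, hle0⟩ :=
      hImp k hk (ytilOf x0 utilF k) (by rw [← hTk]; exact hTC)
    have hGT : G (joinT N k (ytilOf x0 utilF k) (R k (ytilOf x0 utilF k))) = G (ThatF k) := by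
      rw [hTk]
    have hu0hat : u0 ∈ UhatSet N G C R x0 utilF ThatF k :=
      ⟨hu0, by rw [← hGT]; exact hle0⟩
    have hne : (UhatSet N G C R x0 utilF ThatF k).Nonempty := ⟨u0, hu0hat⟩
    obtain ⟨us, hus, husmin⟩ :=
      Set.exists_min_image (Uk N R C k (ytilOf x0 utilF k))
        (fun u => G (Tk N R k (ytilOf x0 utilF k) u)) (Set.toFinite _) hUne
    have husarg : us ∈ argminTk N G R k (ytilOf x0 utilF k)
        (Uk N R C k (ytilOf x0 utilF k)) := ⟨hus, husmin⟩
    have hsub : argminTk N G R k (ytilOf x0 utilF k) (Uk N R C k (ytilOf x0 utilF k)) ⊆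
        UhatSet N G C R x0 utilF ThatF k := by
      rintro v ⟨hv, hvmin⟩
      exact ⟨hv, by rw [← hGT]; exact le_trans (hvmin u0 hu0) hle0⟩
    have hushat : us ∈ UhatSet N G C R x0 utilF ThatF k := hsub husarg
    have hargeq : argminTk N G R k (ytilOf x0 utilF k) (UhatSet N G C R x0 utilF ThatF k)
        = argminTk N G R k (ytilOf x0 utilF k) (Uk N R C k (ytilOf x0 utilF k)) := by
      ext v
      constructor
      · rintro ⟨hv, hvmin⟩
        exact ⟨hv.1, fun w hw => le_trans (hvmin us hushat) (husmin w hw)⟩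
      · rintro hv
        exact ⟨hsub hv, fun w hw => hv.2 w hw.1⟩
    obtain ⟨hue, hTe⟩ := hf k hk hne
    have hyeq : (ytilOf x0 utilF k : Ptraj X U k) = ytilOf x0 util k :=
      Prod.ext rfl (funext fun t => hprev t t.2)
    have huu : utilF k = util k := by
      rw [hue, hargeq, hyeq]
      exact (hnf k hk).symm
    have hargne : (argminTk N G R k (ytilOf x0 utilF k)
        (UhatSet N G C R x0 utilF ThatF k)).Nonempty := by
      rw [hargeq]; exact ⟨us, husarg⟩
    have hmemhat : utilF k ∈ argminTk N G R k (ytilOf x0 utilF k)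
        (UhatSet N G C R x0 utilF ThatF k) := by
      rw [hue]; exact hsel k _ hargne
    have hmemUk : utilF k ∈ Uk N R C k (ytilOf x0 utilF k) := by
      rw [hargeq] at hmemhat
      exact hmemhat.1
    have hC' : ThatF (k + 1) ∈ C := by rw [hTe]; exact hmemUk
    have hT' : ThatF (k + 1)
        = joinT N (k + 1) (ytilOf x0 utilF (k + 1)) (R (k + 1) (ytilOf x0 utilF (k + 1))) := by
      rw [hTe]
      exact Tk_ytilOf N R x0 utilF k
    exact ⟨⟨hne, hsub, hTe⟩, huu, hT', hC'⟩
  have y0eq : (ytraj0 x0 : Ptraj X U 0) = ytilOf x0 utilF 0 :=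
    Prod.ext rfl (funext fun t => t.elim0)
  have main : ∀ k, k ≤ N → (∀ t < k, utilF t = util t) ∧
      ThatF k = joinT N k (ytilOf x0 utilF k) (R k (ytilOf x0 utilF k)) ∧
      ThatF k ∈ C := by
    intro k
    induction k with
    | zero =>
      intro _
      refine ⟨fun t ht => absurd ht (Nat.not_lt_zero t), ?_, ?_⟩
      · rw [hT0, y0eq]
      · rw [hT0]; exact hfeas
    | succ k ih =>
      intro hk1
      have hk : k < N := hk1
      obtain ⟨hprev, hT, hC⟩ := ih (le_of_lt hk)
      obtain ⟨_, huu, hT', hC'⟩ := step k hk hprev hT hC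
      refine ⟨?_, hT', hC'⟩
      intro t ht
      rcases Nat.lt_succ_iff_lt_or_eq.mp ht with h | h
      · exact hprev t h
      · subst h; exact huu
  have huuall : ∀ k < N, utilF k = util k := by
    intro k hk
    obtain ⟨hprev, hT, hC⟩ := main k hk.le
    exact (step k hk hprev hT hC).2.1
  refine ⟨?_, huuall, ?_⟩
  · intro k hk
    obtain ⟨hprev, hT, hC⟩ := main k hk.le
    exact (step k hk hprev hT hC).1
  · exact Prod.ext rfl (funext fun t => huuall t t.2)
end

section
/- Assume the base heuristic H is sequentially improving and that its complete solution from the empty prefix is feasible, H(∅) ∈ C. Then the rollout algorithm for the discrete optimization problem min{G(u) : u ∈ C} is well defined (each set U_k(ũ_0,…,ũ_{k−1}) is nonempty), its final solution ũ = (ũ_0,…,ũ_{N−1}) is feasible (ũ ∈ C), and G(ũ) ≤ G(H(∅)). -/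
/-! Rollout for discrete optimization `min {G(u) : u ∈ C}`, where a solution has `N`
components `u = (u_0,…,u_{N-1})` with `u_k` in the finite nonempty set `V k`.
A prefix `(u_0,…,u_{k-1})` is a dependent function on `Fin k`; a base heuristic `H`
assigns to every prefix a completion, whose components are indexed by absolute time
(only times `k,…,N-1` are relevant). -/

/-- A prefix `(u_0,…,u_{k-1})` of a solution. -/
abbrev SolPrefix (V : ℕ → Type) (k : ℕ) : Type := (t : Fin k) → V t

variable {V : ℕ → Type}

/-- `joinS N k y r` : the complete solution `y ∪ r` obtained by joining a prefix `y`
of length `k` with the completion `r` (indexed by absolute time). -/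
def joinS (N k : ℕ) (y : SolPrefix V k) (r : (t : ℕ) → V t) : SolPrefix V N :=
  fun t => if h : (t : ℕ) < k then y ⟨t, h⟩ else r t

/-- `extendS k y u` : the prefix `(y, u_k)` of length `k+1`. -/
def extendS (k : ℕ) (y : SolPrefix V k) (u : V k) : SolPrefix V (k + 1) :=
  Fin.snoc y u

/-- `TkS N H k y u` : the complete solution `(y,u) ∪ H(y,u)`. -/
def TkS (N : ℕ) (H : (k : ℕ) → SolPrefix V k → (t : ℕ) → V t) (k : ℕ)
    (y : SolPrefix V k) (u : V k) : SolPrefix V N :=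
  joinS N (k + 1) (extendS k y u) (H (k + 1) (extendS k y u))

/-- `UkS N H C k y` : the set `U_k(y) = {u_k ∈ U_k ∣ (y,u_k) ∪ H(y,u_k) ∈ C}`. -/
def UkS (N : ℕ) (H : (k : ℕ) → SolPrefix V k → (t : ℕ) → V t)
    (C : Set (SolPrefix V N)) (k : ℕ) (y : SolPrefix V k) : Set (V k) :=
  {u | TkS N H k y u ∈ C}

/-- The base heuristic `H` is sequentially improving. -/
def SeqImprovingS (N : ℕ) (G : SolPrefix V N → ℝ) (C : Set (SolPrefix V N))
    (H : (k : ℕ) → SolPrefix V k → (t : ℕ) → V t) : Prop :=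
  ∀ k < N, ∀ y : SolPrefix V k, joinS N k y (H k y) ∈ C →
    (UkS N H C k y).Nonempty ∧
      ∃ u ∈ UkS N H C k y, G (TkS N H k y u) ≤ G (joinS N k y (H k y))

open Classical

/-- The component `ũ_k` chosen by the rollout algorithm: a minimizer of
`G((ũ_0,…,ũ_{k-1},u_k) ∪ H(ũ_0,…,ũ_{k-1},u_k))` over `u_k ∈ U_k(ũ_0,…,ũ_{k-1})`
(an arbitrary element if no minimizer exists, which cannot happen under the
assumptions of the theorem). -/
noncomputable def rollSol (N : ℕ) (G : SolPrefix V N → ℝ) (C : Set (SolPrefix V N))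
    (H : (k : ℕ) → SolPrefix V k → (t : ℕ) → V t) [∀ k, Nonempty (V k)]
    (k : ℕ) : V k :=
  let y : SolPrefix V k := fun t : Fin k => rollSol N G C H t.1
  if h : ∃ u ∈ UkS N H C k y, ∀ v ∈ UkS N H C k y,
      G (TkS N H k y u) ≤ G (TkS N H k y v) then
    h.choose
  else Classical.arbitrary (V k)
termination_by k
decreasing_by exact t.2

/-- if the base heuristic `H` is sequentially improving and its complete
solution from the empty prefix is feasible, then the rollout algorithm is well defined
(each `U_k(ũ_0,…,ũ_{k-1})` is nonempty), its final solution `ũ` is feasible, and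
`G(ũ) ≤ G(H(∅))`. -/
theorem discrete_rollout_cost_improvement
    {V : ℕ → Type} [∀ k, Fintype (V k)] [∀ k, Nonempty (V k)]
    (N : ℕ) (hN : 1 ≤ N)
    (G : SolPrefix V N → ℝ) (C : Set (SolPrefix V N)) (hC : C.Nonempty)
    (H : (k : ℕ) → SolPrefix V k → (t : ℕ) → V t)
    (hImp : SeqImprovingS N G C H)
    (hfeas : joinS N 0 (fun t => t.elim0) (H 0 (fun t => t.elim0)) ∈ C) :
    let util : (k : ℕ) → V k := rollSol N G C H
    (∀ k < N, (UkS N H C k (fun t : Fin k => util t)).Nonempty) ∧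
    (fun t : Fin N => util t) ∈ C ∧
    G (fun t : Fin N => util t) ≤
      G (joinS N 0 (fun t => t.elim0) (H 0 (fun t => t.elim0))) := by
  intro util
  -- snoc lemma: the extended prefix equals the rollout prefix of length k+1
  have hsnoc : ∀ k : ℕ, extendS k (fun t : Fin k => util t.1) (util k)
      = (fun t : Fin (k+1) => util t.1) := by
    intro k
    funext t
    refine Fin.lastCases ?_ ?_ t
    · simp [extendS, Fin.snoc_last]
    · intro i; simp [extendS, Fin.snoc_castSucc]
  -- invariant
  have inv : ∀ k, k ≤ N →
      joinS N k (fun t : Fin k => util t.1) (H k (fun t : Fin k => util t.1)) ∈ C ∧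
      G (joinS N k (fun t : Fin k => util t.1) (H k (fun t : Fin k => util t.1))) ≤
        G (joinS N 0 (fun t => t.elim0) (H 0 (fun t => t.elim0))) := by
    intro k
    induction k with
    | zero =>
      intro _
      have h0 : (fun t : Fin 0 => util t.1) = (fun t : Fin 0 => t.elim0) := by
        funext t; exact t.elim0
      rw [h0]
      exact ⟨hfeas, le_refl _⟩
    | succ k ih =>
      intro hk1
      have hk : k < N := lt_of_lt_of_le (Nat.lt_succ_self k) hk1
      obtain ⟨hfe, hle⟩ := ih (le_of_lt hk)
      obtain ⟨hne, u, hu, hGu⟩ := hImp k hk _ hfe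
      -- existence of a minimizer
      have hfin : (UkS N H C k (fun t : Fin k => util t.1)).Finite := Set.toFinite _
      obtain ⟨m, hm, hmin⟩ := Set.exists_min_image _
        (fun v => G (TkS N H k (fun t : Fin k => util t.1) v)) hfin hne
      have hex : ∃ u ∈ UkS N H C k (fun t : Fin k => util t.1),
          ∀ v ∈ UkS N H C k (fun t : Fin k => util t.1),
            G (TkS N H k (fun t : Fin k => util t.1) u) ≤
            G (TkS N H k (fun t : Fin k => util t.1) v) := ⟨m, hm, hmin⟩
      have hroll : util k = hex.choose := by
        show rollSol N G C H k = _
        rw [rollSol]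
        exact dif_pos hex
      obtain ⟨hmem, hminc⟩ := hex.choose_spec
      have hTk : TkS N H k (fun t : Fin k => util t.1) (util k)
          = joinS N (k+1) (fun t : Fin (k+1) => util t.1)
              (H (k+1) (fun t : Fin (k+1) => util t.1)) := by
        rw [TkS, hsnoc k]
      constructor
      · rw [← hTk, hroll]; exact hmem
      · rw [← hTk, hroll]
        calc G (TkS N H k (fun t : Fin k => util t.1) hex.choose)
            ≤ G (TkS N H k (fun t : Fin k => util t.1) u) := hminc u hu
          _ ≤ G (joinS N k (fun t : Fin k => util t.1)
                (H k (fun t : Fin k => util t.1))) := hGu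
          _ ≤ _ := hle
  have hjoinN : joinS N N (fun t : Fin N => util t.1)
      (H N (fun t : Fin N => util t.1)) = (fun t : Fin N => util t.1) := by
    funext t
    simp [joinS, t.2]
  refine ⟨?_, ?_, ?_⟩
  · intro k hk
    exact (hImp k hk _ (inv k (le_of_lt hk)).1).1
  · have := (inv N le_rfl).1
    rwa [hjoinN] at this
  · have := (inv N le_rfl).2
    rwa [hjoinN] at this
end

section
/- Suppose the problem is ε-separable: there exist β̄, γ̄ : Fin m × Fin m → ℝ and a scalar ε ≥ 0 such that |β̄(j,ℓ) + γ̄(ℓ,w) − a(j,ℓ,w)| ≤ ε for all j,ℓ,w. Then the 3-dimensional assignment (σ*,τ*) produced by the enforced separation heuristic achieves the optimal cost within 4mε: Σ_ℓ a(σ*(ℓ),ℓ,τ*(ℓ)) ≤ min over all pairs of permutations (σ,τ) of Σ_ℓ a(σ(ℓ),ℓ,τ(ℓ)) + 4mε. -/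
/-- If the 3-dimensional assignment problem is ε-separable, the enforced
separation heuristic achieves the optimal cost within `4 m ε`. -/
theorem enforced_separation_near_optimal (m : ℕ) (hm : 1 ≤ m)
    (a : Fin m → Fin m → Fin m → ℝ)
    (βbar γbar : Fin m → Fin m → ℝ) (ε : ℝ) (hε : 0 ≤ ε)
    (hsep : ∀ j ℓ w, |βbar j ℓ + γbar ℓ w - a j ℓ w| ≤ ε)
    -- the enforced separation heuristic:
    (c : Fin m → Fin m → ℝ) (hc : ∀ ℓ w, c ℓ w = ⨅ j, a j ℓ w)
    (τstar : Equiv.Perm (Fin m))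
    (hτ : ∀ τ : Equiv.Perm (Fin m), ∑ ℓ, c ℓ (τstar ℓ) ≤ ∑ ℓ, c ℓ (τ ℓ))
    (b : Fin m → Fin m → ℝ) (hb : ∀ j ℓ, b j ℓ = a j ℓ (τstar ℓ))
    (σstar : Equiv.Perm (Fin m))
    (hσ : ∀ σ : Equiv.Perm (Fin m), ∑ ℓ, b (σstar ℓ) ℓ ≤ ∑ ℓ, b (σ ℓ) ℓ) :
    ∑ ℓ, a (σstar ℓ) ℓ (τstar ℓ) ≤
      (⨅ στ : Equiv.Perm (Fin m) × Equiv.Perm (Fin m), ∑ ℓ, a (στ.1 ℓ) ℓ (στ.2 ℓ)) +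
        4 * m * ε := by
  haveI : NeZero m := ⟨by omega⟩
  have hbdd : ∀ (f : Fin m → ℝ), BddBelow (Set.range f) :=
    fun f => (Set.finite_range f).bddBelow
  set B : Fin m → ℝ := fun ℓ => ⨅ j, βbar j ℓ with hBdef
  have key : ∀ στ : Equiv.Perm (Fin m) × Equiv.Perm (Fin m),
      ∑ ℓ, a (σstar ℓ) ℓ (τstar ℓ) ≤ (∑ ℓ, a (στ.1 ℓ) ℓ (στ.2 ℓ)) + 4 * m * ε := by
    rintro ⟨σ, τ⟩
    have h1 : ∑ ℓ, a (σstar ℓ) ℓ (τstar ℓ) ≤ ∑ ℓ, a (σ ℓ) ℓ (τstar ℓ) := by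
      simpa [hb] using hσ σ
    have I2 : ∑ ℓ, a (σ ℓ) ℓ (τstar ℓ) ≤
        (∑ ℓ, βbar (σ ℓ) ℓ) + (∑ ℓ, γbar ℓ (τstar ℓ)) + m * ε := by
      have := Finset.sum_le_sum (fun ℓ (_ : ℓ ∈ Finset.univ) => by
        have h := abs_le.mp (hsep (σ ℓ) ℓ (τstar ℓ))
        linarith [h.1] : ∀ ℓ ∈ Finset.univ,
          a (σ ℓ) ℓ (τstar ℓ) ≤ βbar (σ ℓ) ℓ + γbar ℓ (τstar ℓ) + ε)
      simpa [Finset.sum_add_distrib, Finset.sum_const, Finset.card_univ,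
        nsmul_eq_mul, add_assoc] using this
    have I3 : ∑ ℓ, γbar ℓ (τstar ℓ) ≤
        (∑ ℓ, c ℓ (τstar ℓ)) - (∑ ℓ, B ℓ) + m * ε := by
      have hpt : ∀ ℓ ∈ Finset.univ, γbar ℓ (τstar ℓ) ≤ c ℓ (τstar ℓ) - B ℓ + ε := by
        intro ℓ _
        have hcl : B ℓ + γbar ℓ (τstar ℓ) - ε ≤ c ℓ (τstar ℓ) := by
          rw [hc]
          refine le_ciInf fun j => ?_
          have h := abs_le.mp (hsep j ℓ (τstar ℓ))
          have hBj : B ℓ ≤ βbar j ℓ := ciInf_le (hbdd _) j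
          linarith [h.2]
        linarith
      have := Finset.sum_le_sum hpt
      simpa [Finset.sum_add_distrib, Finset.sum_sub_distrib, Finset.sum_const,
        Finset.card_univ, nsmul_eq_mul] using this
    have Iτ : ∑ ℓ, c ℓ (τstar ℓ) ≤ ∑ ℓ, c ℓ (τ ℓ) := hτ τ
    have I4 : ∑ ℓ, c ℓ (τ ℓ) ≤ (∑ ℓ, B ℓ) + (∑ ℓ, γbar ℓ (τ ℓ)) + m * ε := by
      have hpt : ∀ ℓ ∈ Finset.univ, c ℓ (τ ℓ) ≤ B ℓ + γbar ℓ (τ ℓ) + ε := by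
        intro ℓ _
        obtain ⟨j0, hj0⟩ := Finite.exists_min (fun j => βbar j ℓ)
        have hBj0 : βbar j0 ℓ ≤ B ℓ := le_ciInf hj0
        have hca : c ℓ (τ ℓ) ≤ a j0 ℓ (τ ℓ) := by rw [hc]; exact ciInf_le (hbdd _) j0
        have h := abs_le.mp (hsep j0 ℓ (τ ℓ))
        linarith [h.1]
      have := Finset.sum_le_sum hpt
      simpa [Finset.sum_add_distrib, Finset.sum_const, Finset.card_univ,
        nsmul_eq_mul, add_assoc] using this
    have I5 : (∑ ℓ, βbar (σ ℓ) ℓ) + (∑ ℓ, γbar ℓ (τ ℓ)) ≤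
        (∑ ℓ, a (σ ℓ) ℓ (τ ℓ)) + m * ε := by
      have hpt : ∀ ℓ ∈ Finset.univ,
          βbar (σ ℓ) ℓ + γbar ℓ (τ ℓ) ≤ a (σ ℓ) ℓ (τ ℓ) + ε := by
        intro ℓ _
        have h := abs_le.mp (hsep (σ ℓ) ℓ (τ ℓ))
        linarith [h.2]
      have := Finset.sum_le_sum hpt
      simpa [Finset.sum_add_distrib, Finset.sum_const, Finset.card_univ,
        nsmul_eq_mul] using this
    linarith
  have hfin : ∑ ℓ, a (σstar ℓ) ℓ (τstar ℓ) - 4 * m * ε ≤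
      ⨅ στ : Equiv.Perm (Fin m) × Equiv.Perm (Fin m), ∑ ℓ, a (στ.1 ℓ) ℓ (στ.2 ℓ) :=
    le_ciInf fun στ => by linarith [key στ]
  linarith
end

section
/- If an assignment σ and prices p are almost at equilibrium with parameter ε ≥ 0, then the total benefit of σ is within nε of optimal: Σ_i a(i,σ(i)) ≥ max over permutations τ of Fin n of Σ_i a(i,τ(i)) − nε. -/
/-- Person `i` is almost happy with object `j` under prices `p` and parameter `ε`. -/
def almostHappy (n : ℕ) (a : Fin n → Fin n → ℝ) (p : Fin n → ℝ) (ε : ℝ) (i j : Fin n) : Prop :=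
  a i j - p j ≥ (⨆ j' : Fin n, (a i j' - p j')) - ε

/-!
Weak duality: for any prices `p`, the benefit of every assignment is at most the dual value
`D(p) = ∑ⱼ pⱼ + ∑ᵢ maxⱼ (aᵢⱼ - pⱼ)`, since each person's net value `a i (τ i) - p (τ i)` is at most
their best net value and the prices of the assigned objects add up to `∑ⱼ pⱼ`. Conversely, if every
person is within `ε` of their best net value under `σ`, the same computation shows
`D(p) ≤ ∑ᵢ a i (σ i) + n ε`.
-/

open Finset

section AssignmentDuality

variable {ι : Type*} [Fintype ι] (a : ι → ι → ℝ) (p : ι → ℝ)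

noncomputable def assignmentDual : ℝ :=
  ∑ j, p j + ∑ i, ⨆ j, (a i j - p j)

theorem sum_le_assignmentDual (τ : Equiv.Perm ι) : ∑ i, a i (τ i) ≤ assignmentDual a p := by
  calc ∑ i, a i (τ i) = ∑ i, p (τ i) + ∑ i, (a i (τ i) - p (τ i)) := by
        rw [← sum_add_distrib]; simp
    _ ≤ assignmentDual a p := by
        rw [assignmentDual, Equiv.sum_comp τ p]
        gcongr with i
        exact le_ciSup (f := fun j => a i j - p j) (Set.finite_range _).bddAbove (τ i)

theorem assignmentDual_le_sum_add {ε : ℝ} (σ : Equiv.Perm ι)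
    (hσ : ∀ i, (⨆ j, (a i j - p j)) - ε ≤ a i (σ i) - p (σ i)) :
    assignmentDual a p ≤ ∑ i, a i (σ i) + Fintype.card ι * ε := by
  calc assignmentDual a p
        = ∑ i, p (σ i) + ∑ i, ((⨆ j, (a i j - p j)) - ε) + Fintype.card ι * ε := by
        simp only [assignmentDual, Equiv.sum_comp, sum_sub_distrib, sum_const, card_univ,
          nsmul_eq_mul]
        ring
    _ ≤ ∑ i, p (σ i) + ∑ i, (a i (σ i) - p (σ i)) + Fintype.card ι * ε := by
        linarith [sum_le_sum fun i (_ : i ∈ univ) => hσ i]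
    _ = ∑ i, a i (σ i) + Fintype.card ι * ε := by
        rw [sum_sub_distrib]; ring

end AssignmentDuality

theorem almost_equilibrium_primal_near_optimal_general (n : ℕ)
    (a : Fin n → Fin n → ℝ) (σ : Equiv.Perm (Fin n)) (p : Fin n → ℝ) (ε : ℝ)
    (heq : ∀ i, almostHappy n a p ε i (σ i)) :
    ∑ i, a i (σ i) ≥ (⨆ τ : Equiv.Perm (Fin n), ∑ i, a i (τ i)) - n * ε := by
  have hdual : assignmentDual a p ≤ ∑ i, a i (σ i) + n * ε := by
    simpa using assignmentDual_le_sum_add a p σ heq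
  have hopt : (⨆ τ : Equiv.Perm (Fin n), ∑ i, a i (τ i)) ≤ ∑ i, a i (σ i) + n * ε :=
    ciSup_le fun τ => (sum_le_assignmentDual a p τ).trans hdual
  linarith

/-- an assignment and prices almost at equilibrium with parameter `ε`
give total benefit within `n ε` of optimal. -/
theorem almost_equilibrium_primal_near_optimal (n : ℕ) (hn : 1 ≤ n)
    (a : Fin n → Fin n → ℝ) (σ : Equiv.Perm (Fin n)) (p : Fin n → ℝ) (ε : ℝ) (hε : 0 ≤ ε)
    (heq : ∀ i, almostHappy n a p ε i (σ i)) :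
    ∑ i, a i (σ i) ≥ (⨆ τ : Equiv.Perm (Fin n), ∑ i, a i (τ i)) - n * ε :=
  almost_equilibrium_primal_near_optimal_general n a σ p ε heq
end

section
/- If an assignment σ and prices p are almost at equilibrium with parameter ε ≥ 0, then p is within nε of being optimal for the dual problem: D(p) ≤ D(q) + nε for every price vector q : Fin n → ℝ. -/
/-- The dual function of the assignment problem. -/
noncomputable def dualFn (n : ℕ) (a : Fin n → Fin n → ℝ) (p : Fin n → ℝ) : ℝ :=
  ∑ j, p j + ∑ i, ⨆ j, (a i j - p j)

/-- an assignment and prices almost at equilibrium with parameter `ε`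
give prices within `n ε` of dual optimal. -/
theorem almost_equilibrium_dual_near_optimal (n : ℕ) (hn : 1 ≤ n)
    (a : Fin n → Fin n → ℝ) (σ : Equiv.Perm (Fin n)) (p : Fin n → ℝ) (ε : ℝ) (hε : 0 ≤ ε)
    (heq : ∀ i, almostHappy n a p ε i (σ i)) :
    ∀ q : Fin n → ℝ, dualFn n a p ≤ dualFn n a q + n * ε := by
  intro q
  have hne : Nonempty (Fin n) := ⟨⟨0, hn⟩⟩
  have h1 : dualFn n a p ≤ (∑ i, a i (σ i)) + n * ε := by
    have hb : ∀ i, (⨆ j, (a i j - p j)) ≤ a i (σ i) - p (σ i) + ε := by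
      intro i
      have := heq i
      unfold almostHappy at this
      linarith
    calc dualFn n a p = ∑ j, p j + ∑ i, ⨆ j, (a i j - p j) := rfl
      _ ≤ ∑ j, p j + ∑ i, (a i (σ i) - p (σ i) + ε) := by
          gcongr with i _; exact hb i
      _ = ∑ i, a i (σ i) + (∑ j, p j - ∑ i, p (σ i)) + n * ε := by
          rw [Finset.sum_add_distrib, Finset.sum_sub_distrib]
          simp [Finset.sum_const, Finset.card_univ]
          ring
      _ = ∑ i, a i (σ i) + n * ε := by
          rw [Equiv.sum_comp σ p]; ring
  have h2 : (∑ i, a i (σ i)) ≤ dualFn n a q := by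
    have hb : ∀ i, a i (σ i) - q (σ i) ≤ ⨆ j, (a i j - q j) := by
      intro i
      exact le_ciSup (f := fun j => a i j - q j) (Set.Finite.bddAbove (Set.finite_range _)) (σ i)
    calc (∑ i, a i (σ i)) = ∑ i, q (σ i) + ∑ i, (a i (σ i) - q (σ i)) := by
          rw [← Finset.sum_add_distrib]; simp
      _ ≤ ∑ j, q j + ∑ i, ⨆ j, (a i j - q j) := by
          rw [Equiv.sum_comp σ q]; gcongr with i _; exact hb i
      _ = dualFn n a q := rfl
  linarith
end

section
/- If an assignment σ and prices p are at equilibrium (every person i is happy with σ(i) under p), then D(p) = Σ_i a(i,σ(i)); consequently σ maximizes the total benefit over all permutations of Fin n, and p minimizes the dual function D over all price vectors. -/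
/-- Person `i` is happy with object `j` under prices `p`. -/
def happy (n : ℕ) (a : Fin n → Fin n → ℝ) (p : Fin n → ℝ) (i j : Fin n) : Prop :=
  a i j - p j = ⨆ j' : Fin n, (a i j' - p j')

lemma weak_duality (n : ℕ) (hn : 1 ≤ n) (a : Fin n → Fin n → ℝ)
    (τ : Equiv.Perm (Fin n)) (q : Fin n → ℝ) :
    ∑ i, a i (τ i) ≤ dualFn n a q := by
  have : Nonempty (Fin n) := ⟨⟨0, hn⟩⟩
  have h : ∀ i, a i (τ i) ≤ q (τ i) + ⨆ j, (a i j - q j) := by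
    intro i
    have := le_ciSup (Set.Finite.bddAbove (Set.finite_range _)) (τ i)
      (f := fun j => a i j - q j)
    linarith
  calc ∑ i, a i (τ i) ≤ ∑ i, (q (τ i) + ⨆ j, (a i j - q j)) :=
        Finset.sum_le_sum fun i _ => h i
    _ = ∑ i, q (τ i) + ∑ i, ⨆ j, (a i j - q j) := Finset.sum_add_distrib
    _ = dualFn n a q := by rw [dualFn, Equiv.sum_comp τ q]

/-- at equilibrium, the dual value equals the total benefit; hence the
assignment is primal optimal and the prices are dual optimal. -/
theorem equilibrium_optimality (n : ℕ) (hn : 1 ≤ n) (a : Fin n → Fin n → ℝ)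
    (σ : Equiv.Perm (Fin n)) (p : Fin n → ℝ)
    (heq : ∀ i, happy n a p i (σ i)) :
    dualFn n a p = ∑ i, a i (σ i) ∧
      (∀ τ : Equiv.Perm (Fin n), ∑ i, a i (τ i) ≤ ∑ i, a i (σ i)) ∧
      (∀ q : Fin n → ℝ, dualFn n a p ≤ dualFn n a q) := by
  have hmain : dualFn n a p = ∑ i, a i (σ i) := by
    have : ∑ i, (⨆ j, (a i j - p j)) = ∑ i, (a i (σ i) - p (σ i)) :=
      Finset.sum_congr rfl fun i _ => (heq i).symm
    rw [dualFn, this, Finset.sum_sub_distrib, Equiv.sum_comp σ p]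
    ring
  refine ⟨hmain, fun τ => hmain ▸ weak_duality n hn a τ p,
    fun q => hmain ▸ weak_duality n hn a σ q⟩
end

section
/- If all benefits a(i,j) are integers, 0 ≤ ε < 1/n, and an assignment σ and prices p are almost at equilibrium with parameter ε, then σ is optimal: Σ_i a(i,σ(i)) = max over permutations τ of Fin n of Σ_i a(i,τ(i)). -/
/-- for integer benefits and `0 ≤ ε < 1/n`, an assignment almost at
equilibrium with parameter `ε` is optimal. -/
theorem almost_equilibrium_integer_optimal (n : ℕ) (hn : 1 ≤ n)
    (a : Fin n → Fin n → ℝ) (hint : ∀ i j, ∃ z : ℤ, a i j = (z : ℝ))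
    (σ : Equiv.Perm (Fin n)) (p : Fin n → ℝ) (ε : ℝ)
    (hε : 0 ≤ ε) (hεn : ε < 1 / n)
    (heq : ∀ i, almostHappy n a p ε i (σ i)) :
    ∑ i, a i (σ i) = ⨆ τ : Equiv.Perm (Fin n), ∑ i, a i (τ i) := by
  haveI : Nonempty (Fin n) := ⟨⟨0, hn⟩⟩
  choose z hz using hint
  have key : ∀ τ : Equiv.Perm (Fin n), ∑ i, a i (τ i) ≤ ∑ i, a i (σ i) := by
    intro τ
    -- real inequality with slack n*ε
    have h1 : ∀ i : Fin n, a i (τ i) - p (τ i) ≤ (⨆ j' : Fin n, (a i j' - p j')) := by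
      intro i
      exact le_ciSup (f := fun j' => a i j' - p j') (Set.Finite.bddAbove (Set.finite_range _)) (τ i)
    have h2 : ∀ i : Fin n, (⨆ j' : Fin n, (a i j' - p j')) - ε ≤ a i (σ i) - p (σ i) :=
      fun i => heq i
    have hsum : ∑ i, (a i (τ i) - p (τ i)) - n * ε ≤ ∑ i, (a i (σ i) - p (σ i)) := by
      calc ∑ i, (a i (τ i) - p (τ i)) - n * ε
          ≤ ∑ i, (⨆ j' : Fin n, (a i j' - p j')) - n * ε := by
            gcongr with i _; exact h1 i
        _ = ∑ i, ((⨆ j' : Fin n, (a i j' - p j')) - ε) := by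
            rw [Finset.sum_sub_distrib, Finset.sum_const, Finset.card_univ,
              Fintype.card_fin, nsmul_eq_mul]
        _ ≤ ∑ i, (a i (σ i) - p (σ i)) := Finset.sum_le_sum fun i _ => h2 i
    have hpτ : ∑ i, p (τ i) = ∑ i, p i := Equiv.sum_comp τ p
    have hpσ : ∑ i, p (σ i) = ∑ i, p i := Equiv.sum_comp σ p
    have hreal : ∑ i, a i (τ i) - n * ε ≤ ∑ i, a i (σ i) := by
      have := hsum
      simp only [Finset.sum_sub_distrib, hpτ, hpσ] at this
      linarith
    have hnε : (n : ℝ) * ε < 1 := by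
      have hn0 : (0 : ℝ) < n := by exact_mod_cast hn
      calc (n : ℝ) * ε < n * (1 / n) := mul_lt_mul_of_pos_left hεn hn0
        _ = 1 := by field_simp
    -- integrality
    have hdiff : ∑ i, a i (τ i) - ∑ i, a i (σ i) = ((∑ i, z i (τ i) - ∑ i, z i (σ i) : ℤ) : ℝ) := by
      push_cast
      congr 1 <;> exact Finset.sum_congr rfl fun i _ => hz i _
    have hlt1 : ((∑ i, z i (τ i) - ∑ i, z i (σ i) : ℤ) : ℝ) < 1 := by
      rw [← hdiff]; linarith
    have : (∑ i, z i (τ i) - ∑ i, z i (σ i) : ℤ) ≤ 0 := by exact_mod_cast Int.lt_add_one_iff.mp (by exact_mod_cast hlt1)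
    have : ((∑ i, z i (τ i) - ∑ i, z i (σ i) : ℤ) : ℝ) ≤ 0 := by exact_mod_cast this
    linarith [hdiff ▸ this]
  refine le_antisymm (le_ciSup (f := fun τ : Equiv.Perm (Fin n) => ∑ i, a i (τ i)) (Set.Finite.bddAbove (Set.finite_range _)) σ) (ciSup_le key)
end

section
/- Bidding lemma: suppose n ≥ 2 and ε ≥ 0. Let p be prices, i a person, j_i ∈ argmax_j (a(i,j) − p(j)) a best object for i, v = a(i,j_i) − p(j_i) the best value, and w = max_{j ≠ j_i} (a(i,j) − p(j)) the second best value. Define p' by p'(j_i) = p(j_i) + v − w + ε and p'(j) = p(j) for j ≠ j_i. Then a(i,j_i) − p'(j_i) = max_j (a(i,j) − p'(j)) − ε; in particular, person i is almost happy with object j_i under (p',ε). -/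
/-- the bidding lemma.  After person `i` raises the price of a best
object `j_i` by the bidding increment `v - w + ε`, the value of `j_i` for person `i`
is exactly `ε` below the new best value; in particular `i` is almost happy with `j_i`
under the new prices. -/
theorem bidding_lemma (n : ℕ) (hn : 2 ≤ n) (ε : ℝ) (hε : 0 ≤ ε)
    (a : Fin n → Fin n → ℝ) (p : Fin n → ℝ) (i ji : Fin n)
    (hbest : a i ji - p ji = ⨆ j, (a i j - p j)) :
    let v : ℝ := a i ji - p ji
    let w : ℝ := ⨆ j : {j : Fin n // j ≠ ji}, (a i (j : Fin n) - p (j : Fin n))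
    let p' : Fin n → ℝ := Function.update p ji (p ji + (v - w + ε))
    a i ji - p' ji = (⨆ j, (a i j - p' j)) - ε ∧ almostHappy n a p' ε i ji := by
  intro v w p'
  haveI : Nontrivial (Fin n) := Fin.nontrivial_iff_two_le.mpr hn
  haveI : Nonempty {j : Fin n // j ≠ ji} := ⟨⟨Classical.choose (exists_ne ji),
    Classical.choose_spec (exists_ne ji)⟩⟩
  have hval : a i ji - p' ji = w - ε := by
    simp only [p', Function.update_self]; ring
  have hw_le : ∀ j : Fin n, j ≠ ji → a i j - p j ≤ w := by
    intro j hj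
    exact le_ciSup (f := fun j : {j : Fin n // j ≠ ji} => a i (j : Fin n) - p (j : Fin n))
      (Set.Finite.bddAbove (Set.finite_range _)) ⟨j, hj⟩
  have hsup : (⨆ j, (a i j - p' j)) = w := by
    apply le_antisymm
    · apply ciSup_le
      intro j
      by_cases hj : j = ji
      · subst hj; rw [hval]; linarith
      · simp only [p', Function.update_of_ne hj]; exact hw_le j hj
    · apply ciSup_le
      intro j
      have : a i (j : Fin n) - p' (j : Fin n) = a i (j : Fin n) - p (j : Fin n) := by
        simp only [p', Function.update_of_ne j.2]
      rw [← this]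
      exact le_ciSup (f := fun j : Fin n => a i j - p' j)
        (Set.Finite.bddAbove (Set.finite_range _)) (j : Fin n)
  constructor
  · rw [hval, hsup]
  · unfold almostHappy
    rw [hval, hsup]
end

section
/- If an assignment σ and prices p are almost at equilibrium with parameter ε ≥ 0 for the benefits a, then there exist modified benefits a' : Fin n × Fin n → ℝ with a'(i,j) = a(i,j) whenever j ≠ σ(i) and |a'(i,σ(i)) − a(i,σ(i))| ≤ ε for all i, such that σ and p are at equilibrium for the benefits a' (every person i is happy with σ(i) under p when the benefits are a'). -/
/-- an assignment and prices almost at equilibrium for benefits `a` are at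
equilibrium for slightly modified benefits `a'`, differing from `a` only on assigned
pairs, by at most `ε`. -/
theorem almost_equilibrium_is_equilibrium_for_modified_benefits
    (n : ℕ) (hn : 1 ≤ n) (ε : ℝ) (hε : 0 ≤ ε)
    (a : Fin n → Fin n → ℝ) (σ : Equiv.Perm (Fin n)) (p : Fin n → ℝ)
    (heq : ∀ i, almostHappy n a p ε i (σ i)) :
    ∃ a' : Fin n → Fin n → ℝ,
      (∀ i j, j ≠ σ i → a' i j = a i j) ∧
      (∀ i, |a' i (σ i) - a i (σ i)| ≤ ε) ∧
      (∀ i, happy n a' p i (σ i)) := by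
  haveI : NeZero n := ⟨by omega⟩
  set M : Fin n → ℝ := fun i => ⨆ j' : Fin n, (a i j' - p j') with hM
  refine ⟨fun i j => if j = σ i then M i + p (σ i) else a i j, ?_, ?_, ?_⟩
  · intro i j hj; simp [hj]
  · intro i
    have h1 := heq i
    have h2 : a i (σ i) - p (σ i) ≤ M i :=
      le_ciSup (f := fun j' : Fin n => a i j' - p j')
        (Set.Finite.bddAbove (Set.finite_range _)) (σ i)
    unfold almostHappy at h1
    simp only [eq_self_iff_true, if_true]
    rw [abs_le]; constructor <;> nlinarith
  · intro i
    unfold happy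
    simp only [eq_self_iff_true, if_true]
    have hub : ∀ j : Fin n, (if j = σ i then M i + p (σ i) else a i j) - p j ≤ M i := by
      intro j
      by_cases hj : j = σ i
      · simp [hj]
      · simp only [if_neg hj]
        exact le_ciSup (f := fun j' : Fin n => a i j' - p j')
          (Set.Finite.bddAbove (Set.finite_range _)) j
    have := le_ciSup (f := fun j : Fin n =>
        (if j = σ i then M i + p (σ i) else a i j) - p j)
        (Set.Finite.bddAbove (Set.finite_range _)) (σ i)
    simp only [eq_self_iff_true, if_true] at this ⊢
    have h2 : (⨆ j : Fin n, ((if j = σ i then M i + p (σ i) else a i j) - p j)) ≤ M i :=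
      ciSup_le hub
    linarith
end
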